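/- arXiv:1505.04455 — 2 statements merged into one kernel-verified Lean document; each statement's English description precedes it below -/
import Mathlib

section
/- Let a, b ∈ ℂ and set τ := (a+b)/2, γ := b − a. If μ ∈ ℂ does not lie on the closed segment [a,b] = {(1−t)a + tb : 0 ≤ t ≤ 1}, then τ − μ ≠ 0 and 1 − ((γ/2)/(τ−μ))² does not belong to the half-line (−∞, 0] ⊆ ℝ ⊆ ℂ. Consequently the principal square root of 1 − ((γ/2)/(τ−μ))² is well defined and nonzero for all μ off the segment [a,b]. -/
/-- If `μ` avoids the closed segment `[a,b] ⊆ ℂ`, then with `τ = (a+b)/2`,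
`γ = b - a`, one has `τ - μ ≠ 0`, the number `1 - ((γ/2)/(τ-μ))²` is not on the
half-line `(-∞, 0]`, and its principal square root is nonzero. -/
theorem segment_avoidance_standard_root (a b μ : ℂ)
    (hμ : μ ∉ segment ℝ a b) :
    ((a + b) / 2 - μ ≠ 0) ∧
    (∀ x : ℝ, x ≤ 0 →
      (1 : ℂ) - (((b - a) / 2) / ((a + b) / 2 - μ)) ^ 2 ≠ (x : ℂ)) ∧
    ((1 : ℂ) - (((b - a) / 2) / ((a + b) / 2 - μ)) ^ 2) ^ ((1 : ℂ) / 2) ≠ 0 := by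
  have hd : (a + b) / 2 - μ ≠ 0 := by
    intro h
    apply hμ
    have : μ = (a + b) / 2 := by linear_combination -h
    refine ⟨1/2, 1/2, by norm_num, by norm_num, by norm_num, ?_⟩
    rw [this]
    simp [Complex.real_smul]
    ring
  -- key: the quotient cannot be a real number of absolute value ≥ 1
  have key : ∀ c : ℝ, 1 ≤ |c| →
      ((b - a) / 2) / ((a + b) / 2 - μ) ≠ (c : ℂ) := by
    intro c hc hw
    have hc0 : c ≠ 0 := by
      intro h; rw [h] at hc; norm_num at hc
    have hcC : (c : ℂ) ≠ 0 := by exact_mod_cast hc0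
    set s : ℝ := 1 / c with hs
    have hsabs : |s| ≤ 1 := by
      rw [hs, abs_div, abs_one]
      rw [div_le_one (by positivity)]
      simpa using hc
    have hsle := abs_le.mp hsabs
    rw [div_eq_iff hd] at hw
    apply hμ
    refine ⟨(1 + s) / 2, (1 - s) / 2, by linarith [hsle.1], by linarith [hsle.2],
      by ring, ?_⟩
    simp only [Complex.real_smul]
    push_cast
    have hscs : (s : ℂ) * c = 1 := by
      push_cast [hs]
      field_simp
    linear_combination (-(s:ℂ)) * hw - ((a + b)/2 - μ) * hscs
  have h2 : ∀ x : ℝ, x ≤ 0 →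
      (1 : ℂ) - (((b - a) / 2) / ((a + b) / 2 - μ)) ^ 2 ≠ (x : ℂ) := by
    intro x hx h
    set w := ((b - a) / 2) / ((a + b) / 2 - μ) with hwdef
    have hr : (1 : ℝ) ≤ 1 - x := by linarith
    have hsq : ((Real.sqrt (1 - x) : ℂ)) ^ 2 = ((1 - x : ℝ) : ℂ) := by
      norm_cast
      exact Real.sq_sqrt (by linarith)
    have hfac : (w - Real.sqrt (1 - x)) * (w + Real.sqrt (1 - x)) = 0 := by
      have : w ^ 2 = ((1 - x : ℝ) : ℂ) := by push_cast; linear_combination -h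
      linear_combination this - hsq
    have hsqrt1 : 1 ≤ |Real.sqrt (1 - x)| := by
      rw [abs_of_nonneg (Real.sqrt_nonneg _)]
      nlinarith [Real.sq_sqrt (show (0:ℝ) ≤ 1 - x by linarith),
        Real.sqrt_nonneg (1 - x)]
    rcases mul_eq_zero.mp hfac with h1 | h1
    · exact key (Real.sqrt (1 - x)) hsqrt1 (by linear_combination h1)
    · exact key (-(Real.sqrt (1 - x))) (by rwa [abs_neg]) (by push_cast; linear_combination h1)
  refine ⟨hd, h2, ?_⟩
  rw [Ne, Complex.cpow_eq_zero_iff]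
  rintro ⟨h0, -⟩
  exact h2 0 le_rfl (by simpa using h0)
end

section
/- Let a, b ∈ ℂ, τ := (a+b)/2, γ := b − a, and for μ ∉ [a,b] let R(μ) := (τ−μ)·(1 − ((γ/2)/(τ−μ))²)^{1/2} with the principal square root. Fix ε ∈ {1, −1} and define f_ε(μ) := (τ−μ) − ε R(μ). Then for every μ ∈ ℂ∖[a,b] with R(μ) ≠ 0, f_ε is complex differentiable at μ with derivative f_ε'(μ) = (ε / R(μ)) · f_ε(μ). -/
/-! With `d = τ - z`, `c = γ/2` and `s = (1 - (c/d)²)^{1/2}` we have `R = d s` and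
`s² = 1 - c²/d²`, so the chain rule gives `R' = -s - c²/(d² s) = -1/s`; hence
`f_ε' = -1 + ε/s = (ε/R) f_ε` since `ε² = 1`. The principal root is differentiable at `μ`
because `1 - (c/d)²` is a non-positive real only when `μ = τ - c/r` with `r` real and
`|r| ≥ 1`, i.e. only on `[a, b]`. -/

open Complex

namespace Complex

lemma add_div_two_add_mul_mem_segment (a b : ℂ) {s : ℝ} (hs : |s| ≤ 1) :
    (a + b) / 2 + s * ((b - a) / 2) ∈ segment ℝ a b := by
  obtain ⟨hlo, hhi⟩ := abs_le.1 hs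
  rw [segment_eq_image']
  refine ⟨(1 + s) / 2, ⟨by linarith, by linarith⟩, ?_⟩
  simp only [real_smul]
  push_cast
  ring

lemma add_div_two_sub_ne_zero_of_notMem_segment {a b μ : ℂ} (hμ : μ ∉ segment ℝ a b) :
    (a + b) / 2 - μ ≠ 0 := by
  intro h
  refine hμ ?_
  simpa [sub_eq_zero.1 h] using add_div_two_add_mul_mem_segment a b (s := 0) (by simp)

lemma one_sub_sq_mem_slitPlane {u : ℂ} (hu : ∀ r : ℝ, 1 ≤ |r| → u ≠ r) :
    1 - u ^ 2 ∈ slitPlane := by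
  rw [mem_slitPlane_iff]
  by_contra! h
  obtain ⟨hre, him⟩ := h
  simp only [sq, sub_re, sub_im, one_re, one_im, mul_re, mul_im] at hre him
  have him0 : u.im = 0 := by
    rcases mul_eq_zero.1 (show u.re * u.im = 0 by linarith) with hx | hy
    · nlinarith
    · exact hy
  refine hu u.re ?_ (ext rfl (by simp [him0]))
  exact one_le_sq_iff_one_le_abs _ |>.1 (by nlinarith)

lemma one_sub_sq_div_mem_slitPlane_of_notMem_segment {a b μ : ℂ} (hμ : μ ∉ segment ℝ a b) :
    1 - ((b - a) / 2 / ((a + b) / 2 - μ)) ^ 2 ∈ slitPlane := by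
  refine one_sub_sq_mem_slitPlane fun r hr hu => hμ ?_
  have hd := add_div_two_sub_ne_zero_of_notMem_segment hμ
  have hr0 : (r : ℂ) ≠ 0 := ofReal_ne_zero.2 (by rintro rfl; norm_num at hr)
  have hμr : μ = (a + b) / 2 + ((-r⁻¹ : ℝ) : ℂ) * ((b - a) / 2) := by
    have hc := (div_eq_iff hd).1 hu
    push_cast
    rw [hc]
    field_simp
    ring
  rw [hμr]
  exact add_div_two_add_mul_mem_segment a b (by rwa [abs_neg, abs_inv, inv_le_one₀ (by positivity)])

end Complex

noncomputable def standardRoot (τ c z : ℂ) : ℂ :=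
  (τ - z) * (1 - (c / (τ - z)) ^ 2) ^ (1 / 2 : ℂ)

lemma hasDerivAt_standardRoot {τ c μ : ℂ} (hd : τ - μ ≠ 0)
    (hw : 1 - (c / (τ - μ)) ^ 2 ∈ slitPlane) :
    HasDerivAt (standardRoot τ c) (-((1 - (c / (τ - μ)) ^ 2) ^ (1 / 2 : ℂ))⁻¹) μ := by
  have hsub : HasDerivAt (fun z => τ - z) (-1) μ := by
    simpa using (hasDerivAt_id μ).const_sub τ
  have hroot := ((((hasDerivAt_const μ c).div hsub hd).pow 2).const_sub 1).cpow_const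
    (c := 1 / 2) hw
  simp only [Pi.div_apply, Pi.pow_apply] at hroot
  refine (hsub.mul hroot).congr_deriv ?_
  set w := 1 - (c / (τ - μ)) ^ 2 with hw_def
  have hsq : (w ^ (1 / 2 : ℂ)) ^ 2 = w := by
    simpa only [one_div, Nat.cast_ofNat] using cpow_ofNat_inv_pow w 2
  have hs0 : w ^ (1 / 2 : ℂ) ≠ 0 := cpow_ne_zero_iff.2 (.inl (slitPlane_ne_zero hw))
  rw [show (1 / 2 : ℂ) - 1 = -(1 / 2) by norm_num, cpow_neg]
  norm_num
  field_simp
  rw [hsq, hw_def]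
  field_simp
  ring

theorem standard_root_ode_general (a b : ℂ) (ε : ℂ) (hε : ε = 1 ∨ ε = -1)
    (R f : ℂ → ℂ)
    (hR : R = fun z => ((a + b) / 2 - z) *
      ((1 : ℂ) - (((b - a) / 2) / ((a + b) / 2 - z)) ^ 2) ^ ((1 : ℂ) / 2))
    (hf : f = fun z => ((a + b) / 2 - z) - ε * R z)
    (μ : ℂ) (hμ : μ ∉ segment ℝ a b) :
    HasDerivAt f ((ε / R μ) * f μ) μ := by
  obtain rfl : R = standardRoot ((a + b) / 2) ((b - a) / 2) := hR
  subst hf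
  have hd := add_div_two_sub_ne_zero_of_notMem_segment hμ
  have hw := one_sub_sq_div_mem_slitPlane_of_notMem_segment hμ
  have hs0 := (cpow_ne_zero_iff (y := 1 / 2)).2 (.inl (slitPlane_ne_zero hw))
  have hε2 : ε ^ 2 = 1 := by rcases hε with rfl | rfl <;> norm_num
  refine (((hasDerivAt_id μ).const_sub _).sub
    ((hasDerivAt_standardRoot hd hw).const_mul ε)).congr_deriv ?_
  simp only [standardRoot]
  generalize (1 - ((b - a) / 2 / ((a + b) / 2 - μ)) ^ 2) ^ (1 / 2 : ℂ) = s at hs0 ⊢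
  generalize (a + b) / 2 - μ = d at hd ⊢
  field_simp
  linear_combination s * hε2

/-- With `τ = (a+b)/2`, `γ = b-a`, `R(z) = (τ-z)(1-((γ/2)/(τ-z))²)^{1/2}`
(principal square root) and `f_ε(z) = (τ-z) - ε R(z)` for `ε ∈ {1,-1}`,
at every `μ` off the closed segment `[a,b]` with `R(μ) ≠ 0` the function `f_ε`
is complex differentiable with derivative `(ε/R(μ)) f_ε(μ)`. -/
theorem standard_root_ode (a b : ℂ) (ε : ℂ) (hε : ε = 1 ∨ ε = -1)
    (R f : ℂ → ℂ)
    (hR : R = fun z => ((a + b) / 2 - z) *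
      ((1 : ℂ) - (((b - a) / 2) / ((a + b) / 2 - z)) ^ 2) ^ ((1 : ℂ) / 2))
    (hf : f = fun z => ((a + b) / 2 - z) - ε * R z)
    (μ : ℂ) (hμ : μ ∉ segment ℝ a b) (hRμ : R μ ≠ 0) :
    HasDerivAt f ((ε / R μ) * f μ) μ :=
  standard_root_ode_general a b ε hε R f hR hf μ hμ
end
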